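/- The expected number of corners in a uniformly random permutation tableau of size n equals (n+4)/6 − 1/n; equivalently, the total number of corners over all permutation tableaux of size n equals n!·((n+4)/6 − 1/n). -/

import Mathlib

open scoped BigOperators
open Nat

/-- The `t`-th border edge (1-indexed, read from northeast to southwest) of a Ferrers
shape with `cols` columns (rows given by the Young diagram `D`, possibly together with
extra empty rows) is a south step.  The south step belonging to row `i` occurs at
position `i + 1 + (cols - rowLen i)`. -/
def IsSouth (D : YoungDiagram) (cols t : ℕ) : Prop :=
  ∃ i, t = i + 1 + (cols - D.rowLen i)

/-- Corners of a Ferrers diagram: cells whose right and bottom edges are both border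
edges. -/
noncomputable def cornerCount (D : YoungDiagram) : ℕ :=
  {c : ℕ × ℕ | c ∈ D ∧ (c.1 + 1, c.2) ∉ D ∧ (c.1, c.2 + 1) ∉ D}.ncard

/-- A permutation tableau of size `n`: a Ferrers diagram of half-perimeter `n`
(`rows` rows, possibly empty, with the nonempty rows forming the Young diagram
`shape`) filled with `0`s and `1`s (`filling c = true` means the cell `c` contains
a `1`), such that every column contains at least one `1` and no `0` has a `1` above
it in its column and simultaneously a `1` to its left in its row. -/
structure PermTableau (n : ℕ) where
  shape : YoungDiagram
  rows : ℕ
  rows_pos : 0 < rows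
  rows_ge : shape.colLen 0 ≤ rows
  half : rows + shape.rowLen 0 = n
  filling : ℕ × ℕ → Bool
  support : ∀ c : ℕ × ℕ, c ∉ shape → filling c = false
  col_one : ∀ j < shape.rowLen 0, ∃ i, filling (i, j) = true
  avoid : ∀ i j : ℕ, (i, j) ∈ shape → filling (i, j) = false →
      (∃ i' < i, filling (i', j) = true) → ∀ j' < j, filling (i, j') = false

/-- The `t`-th border edge of a permutation tableau is a south step. -/
def PermTableau.south {n : ℕ} (T : PermTableau n) (t : ℕ) : Prop :=
  IsSouth T.shape (T.shape.rowLen 0) t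

/-- Row `i` of a permutation tableau is unrestricted: it contains no restricted `0`
(a `0` with a `1` above it in its column). -/
def PermTableau.unres {n : ℕ} (T : PermTableau n) (i : ℕ) : Prop :=
  ∀ j, (i, j) ∈ T.shape → T.filling (i, j) = false → ∀ i' < i, T.filling (i', j) = false

/-- The number of unrestricted rows of a permutation tableau. -/
noncomputable def PermTableau.U {n : ℕ} (T : PermTableau n) : ℕ :=
  {i | i < T.rows ∧ T.unres i}.ncard

/-- A tree-like tableau of size `n`: a Ferrers diagram of half-perimeter `n + 1`
with pointed cells such that the top-left cell is pointed (the root point), every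
row and every column contains a pointed cell, for every pointed cell all the cells
above it are empty or all the cells to its left are empty, and every non-root point
has a point above it or to its left (so that the points form a tree rooted at the
root point). -/
structure TreeLike (n : ℕ) where
  shape : YoungDiagram
  half : shape.colLen 0 + shape.rowLen 0 = n + 1
  point : ℕ × ℕ → Bool
  support : ∀ c : ℕ × ℕ, c ∉ shape → point c = false
  root : point (0, 0) = true
  row_point : ∀ i < shape.colLen 0, ∃ j, point (i, j) = true
  col_point : ∀ j < shape.rowLen 0, ∃ i, point (i, j) = true
  cond : ∀ i j : ℕ, point (i, j) = true →
      (∀ i' < i, point (i', j) = false) ∨ (∀ j' < j, point (i, j') = false)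
  conn : ∀ i j : ℕ, point (i, j) = true → (i, j) ≠ (0, 0) →
      (∃ i' < i, point (i', j) = true) ∨ (∃ j' < j, point (i, j') = true)

/-- The `t`-th border edge of a tree-like tableau is a south step (there are `n + 1`
border edges). -/
def TreeLike.south {n : ℕ} (T : TreeLike n) (t : ℕ) : Prop :=
  IsSouth T.shape (T.shape.rowLen 0) t

/-- A symmetric tree-like tableau of size `2 * n + 1`: a tree-like tableau invariant
under reflection about the main diagonal. -/
structure SymTreeLike (n : ℕ) extends TreeLike (2 * n + 1) where
  sym_shape : toTreeLike.shape.transpose = toTreeLike.shape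
  sym_point : ∀ i j : ℕ, toTreeLike.point (i, j) = toTreeLike.point (j, i)

/-- Cells of a shifted Ferrers diagram with `k` columns: on top a staircase of `k`
added rows, row `i` (for `i < k`) having the `i + 1` cells in columns `0, …, i`
with rightmost (diagonal) cell `(i, i)`, and below it the rows of the Ferrers
diagram `D` (row `k + i` of the shifted diagram is row `i` of `D`). -/
def BCell (k : ℕ) (D : YoungDiagram) (c : ℕ × ℕ) : Prop :=
  (c.1 < k ∧ c.2 ≤ c.1) ∨ (k ≤ c.1 ∧ (c.1 - k, c.2) ∈ D)

/-- A type-B permutation tableau of size `n`: a shifted Ferrers diagram of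
half-perimeter `n` (`cols` columns and `n - cols` lower rows, possibly empty, the
nonempty ones forming the Young diagram `shape`) filled with `0`s and `1`s such
that every column contains at least one `1`, no `0` has a `1` above it in its
column and simultaneously a `1` on its side in its row, and every row whose
diagonal cell contains a `0` is entirely filled with `0`s. -/
structure BTableau (n : ℕ) where
  cols : ℕ
  cols_le : cols ≤ n
  shape : YoungDiagram
  rows_ge : shape.colLen 0 ≤ n - cols
  width_le : shape.rowLen 0 ≤ cols
  filling : ℕ × ℕ → Bool
  support : ∀ c : ℕ × ℕ, ¬ BCell cols shape c → filling c = false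
  col_one : ∀ j < cols, ∃ i, filling (i, j) = true
  avoid : ∀ i j : ℕ, BCell cols shape (i, j) → filling (i, j) = false →
      (∃ i' < i, filling (i', j) = true) → ∀ j' < j, filling (i, j') = false
  diag : ∀ i < cols, filling (i, i) = false → ∀ j, filling (i, j) = false

/-- The `t`-th border edge of a type-B permutation tableau is a south step (there
are `n` border edges, those of the underlying, unshifted, Ferrers diagram). -/
def BTableau.south {n : ℕ} (B : BTableau n) (t : ℕ) : Prop :=
  IsSouth B.shape B.cols t

/-- Row `i` (among the `n` rows of the shifted diagram) of a type-B permutation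
tableau is unrestricted: it contains no restricted `0` and no diagonal `0`. -/
def BTableau.unres {n : ℕ} (B : BTableau n) (i : ℕ) : Prop :=
  (i < B.cols → B.filling (i, i) = true) ∧
  ∀ j, BCell B.cols B.shape (i, j) → B.filling (i, j) = false →
    ∀ i' < i, B.filling (i', j) = false

/-- The number of unrestricted rows of a type-B permutation tableau. -/
noncomputable def BTableau.U {n : ℕ} (B : BTableau n) : ℕ :=
  {i | i < n ∧ B.unres i}.ncard

/-- The number of corners of a type-B permutation tableau: occurrences of a south
border step immediately followed by a west border step. -/
noncomputable def BTableau.corners {n : ℕ} (B : BTableau n) : ℕ :=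
  {k | 1 ≤ k ∧ k + 1 ≤ n ∧ B.south k ∧ ¬ B.south (k + 1)}.ncard

/-!
Removing an empty bottom row, or else the first column, is a bijection between permutation
tableaux of size `n + 2` and the disjoint union of those of size `n + 1` with the pairs `(T, A)`,
`A` a nonempty set of unrestricted rows of `T` (the rows of the `1`s of the first column). Adding
that column makes the unrestricted rows `A` together with the unrestricted rows above `min A`, and
creates a new corner exactly when the bottom row of `T` was empty. Weighting each tableau by `m ^ U`
(`U` the number of unrestricted rows) turns this into recurrences: `∑ m ^ U` is the rising
factorial `m (m + 1) ⋯ (m + n - 1)`, which gives the same sum over tableaux with empty bottom row,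
and then a closed form for `∑ corners * m ^ U`; at `m = 1` it is the theorem.
-/

open Finset in
theorem Finset.sum_nonempty_powerset_pow_card_add_card_lt {α R : Type*} [LinearOrder α]
    [CommRing R] (S : Finset α) (m : R) :
    ∑ A ∈ S.powerset with A.Nonempty, m ^ (#A + #{x ∈ S | ∀ a ∈ A, x < a}) =
      m * ((m + 1) ^ #S - m ^ #S) := by
  induction S using Finset.induction_on_min with
  | empty => simp [filter_singleton]
  | insert a s ha ih =>
    have has : a ∉ s := fun h => lt_irrefl a (ha a h)
    have hbelow_insert : ∀ A ⊆ s, #{x ∈ insert a s | ∀ b ∈ insert a A, x < b} = 0 := by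
      intro A _
      simp only [card_eq_zero, filter_eq_empty_iff, mem_insert]
      rintro x (rfl | hx) h
      · exact lt_irrefl x (h x (Or.inl rfl))
      · exact lt_asymm (ha x hx) (h a (Or.inl rfl))
    have hbelow : ∀ A ⊆ s, A.Nonempty →
        #{x ∈ insert a s | ∀ b ∈ A, x < b} = #{x ∈ s | ∀ b ∈ A, x < b} + 1 := by
      intro A hA _
      rw [filter_insert, if_pos fun b hb => ha b (hA hb), card_insert_of_notMem]
      exact fun h => has (mem_filter.1 h).1
    have hpow : ∑ A ∈ s.powerset, m ^ #A = (m + 1) ^ #s := by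
      simpa using sum_pow_mul_eq_add_pow m 1 s
    rw [sum_filter, sum_powerset_insert has, card_insert_of_notMem has]
    have hfirst : (∑ t ∈ s.powerset,
        if t.Nonempty then m ^ (#t + #{x ∈ insert a s | ∀ b ∈ t, x < b}) else 0) =
        m * ∑ A ∈ s.powerset with A.Nonempty, m ^ (#A + #{x ∈ s | ∀ b ∈ A, x < b}) := by
      rw [sum_filter, mul_sum]
      refine sum_congr rfl fun t ht => ?_
      split_ifs with ht₀
      · rw [hbelow t (mem_powerset.1 ht) ht₀, ← add_assoc, pow_succ, mul_comm]
      · rw [mul_zero]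
    have hsecond : (∑ t ∈ s.powerset, if (insert a t).Nonempty then
        m ^ (#(insert a t) + #{x ∈ insert a s | ∀ b ∈ insert a t, x < b}) else 0) =
        m * ∑ A ∈ s.powerset, m ^ #A := by
      rw [mul_sum]
      refine sum_congr rfl fun t ht => ?_
      rw [if_pos (insert_nonempty a t), hbelow_insert t (mem_powerset.1 ht),
        card_insert_of_notMem fun h => has (mem_powerset.1 ht h), add_zero, pow_succ, mul_comm]
    rw [hfirst, hsecond, ih, hpow]
    ring

namespace YoungDiagram

theorem rowLen_eq_of_forall_mem_iff {μ : YoungDiagram} {i m : ℕ}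
    (h : ∀ j, (i, j) ∈ μ ↔ j < m) : μ.rowLen i = m := by
  have h₁ := h (μ.rowLen i)
  have h₂ := h m
  rw [mem_iff_lt_rowLen] at h₁ h₂
  omega

theorem colLen_eq_of_forall_mem_iff {μ : YoungDiagram} {j m : ℕ}
    (h : ∀ i, (i, j) ∈ μ ↔ i < m) : μ.colLen j = m := by
  rw [← rowLen_transpose]
  exact rowLen_eq_of_forall_mem_iff fun i => by rw [mem_transpose]; exact h i

@[simp]
theorem rowLen_bot (i : ℕ) : (⊥ : YoungDiagram).rowLen i = 0 :=
  rowLen_eq_of_forall_mem_iff fun _ => by simp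

@[simp]
theorem colLen_bot (j : ℕ) : (⊥ : YoungDiagram).colLen j = 0 :=
  colLen_eq_of_forall_mem_iff fun _ => by simp

/-- `μ` shifted one step to the right, with a new first column of length `r`. -/
def consCol (μ : YoungDiagram) (r : ℕ) (hr : μ.colLen 0 ≤ r) : YoungDiagram where
  cells := (Finset.range r).image (fun i => (i, 0)) ∪ μ.cells.image (fun c => (c.1, c.2 + 1))
  isLowerSet := by
    rintro ⟨i, j⟩ ⟨i', j'⟩ ⟨hi : i' ≤ i, hj : j' ≤ j⟩
    simp only [Finset.coe_union, Finset.coe_image, Set.mem_union, Set.mem_image,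
      Finset.mem_coe, Finset.mem_range, Prod.mk.injEq, mem_cells]
    rintro (⟨a, ha, rfl, rfl⟩ | ⟨⟨a, b⟩, hab, rfl, rfl⟩)
    · exact Or.inl ⟨i', by omega, rfl, by omega⟩
    · rcases j'.eq_zero_or_pos with rfl | hj'
      · exact Or.inl ⟨i', (mem_iff_lt_colLen.1 (μ.up_left_mem hi (zero_le b) hab)).trans_le hr,
          rfl, rfl⟩
      · exact Or.inr ⟨(i', j' - 1), μ.up_left_mem hi (by omega) hab, rfl, by omega⟩

def cornerSet (μ : YoungDiagram) : Set (ℕ × ℕ) :=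
  {c | c ∈ μ ∧ (c.1 + 1, c.2) ∉ μ ∧ (c.1, c.2 + 1) ∉ μ}

theorem cornerCount_eq_ncard_cornerSet (μ : YoungDiagram) :
    cornerCount μ = (cornerSet μ).ncard := rfl

theorem cornerSet_finite (μ : YoungDiagram) : (cornerSet μ).Finite :=
  μ.cells.finite_toSet.subset fun _ hc => hc.1

section consCol

variable {μ : YoungDiagram} {r : ℕ} {hr : μ.colLen 0 ≤ r}

theorem mem_consCol_zero {i : ℕ} : (i, 0) ∈ consCol μ r hr ↔ i < r := by
  simp [consCol, ← mem_cells]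

theorem mem_consCol_succ {i j : ℕ} : (i, j + 1) ∈ consCol μ r hr ↔ (i, j) ∈ μ := by
  simp [consCol, ← mem_cells]

theorem colLen_consCol_zero : (consCol μ r hr).colLen 0 = r :=
  colLen_eq_of_forall_mem_iff fun _ => mem_consCol_zero

theorem rowLen_consCol {i : ℕ} (hi : i < r) : (consCol μ r hr).rowLen i = μ.rowLen i + 1 :=
  rowLen_eq_of_forall_mem_iff fun j => by
    cases j with
    | zero => simp [mem_consCol_zero, hi]
    | succ j => rw [mem_consCol_succ, mem_iff_lt_rowLen]; omega

theorem cornerSet_consCol (hr₀ : 0 < r) :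
    cornerSet (consCol μ r hr) =
      Prod.map id (· + 1) '' cornerSet μ ∪ {c | c = (r - 1, 0) ∧ μ.colLen 0 < r} := by
  ext ⟨i, j⟩
  cases j with
  | zero =>
    have hshift (c : ℕ × ℕ) : Prod.map id (· + 1) c ≠ (i, 0) := by simp [Prod.ext_iff]
    simp only [cornerSet, Set.mem_ofPred_eq, Set.mem_union, Set.mem_image, hshift, and_false,
      exists_false, false_or, Prod.mk.injEq, and_true, mem_consCol_zero, mem_consCol_succ]
    rw [mem_iff_lt_colLen]
    omega
  | succ j =>
    simp [cornerSet, mem_consCol_succ]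

theorem cornerCount_consCol (hr₀ : 0 < r) :
    cornerCount (consCol μ r hr) = cornerCount μ + if μ.colLen 0 < r then 1 else 0 := by
  have hinj : Function.Injective (Prod.map id (· + 1) : ℕ × ℕ → ℕ × ℕ) :=
    Prod.map_injective.2 ⟨Function.injective_id, add_left_injective 1⟩
  have hdisj : Disjoint (Prod.map id (· + 1) '' cornerSet μ)
      {c | c = (r - 1, 0) ∧ μ.colLen 0 < r} :=
    Set.disjoint_left.2 fun _ ⟨_, _, hc⟩ ⟨hc', _⟩ => by subst hc; simp [Prod.ext_iff] at hc'
  have hfin : {c | c = (r - 1, 0) ∧ μ.colLen 0 < r}.Finite :=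
    (Set.finite_singleton _).subset fun _ hc => hc.1
  rw [cornerCount_eq_ncard_cornerSet, cornerCount_eq_ncard_cornerSet, cornerSet_consCol hr₀,
    Set.ncard_union_eq hdisj ((cornerSet_finite μ).image _) hfin,
    Set.ncard_image_of_injective _ hinj]
  split_ifs with h <;> simp [h]

end consCol

noncomputable def dropCol (μ : YoungDiagram) : YoungDiagram where
  cells := μ.cells.preimage (Prod.map id (· + 1))
    (Prod.map_injective.2 ⟨Function.injective_id, add_left_injective 1⟩).injOn
  isLowerSet := by
    rintro ⟨i, j⟩ ⟨i', j'⟩ ⟨hi : i' ≤ i, hj : j' ≤ j⟩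
    simp only [Finset.coe_preimage, Set.mem_preimage, Prod.map_apply, id_eq, Finset.mem_coe,
      mem_cells]
    exact μ.up_left_mem hi (by omega)

theorem mem_dropCol {μ : YoungDiagram} {i j : ℕ} :
    (i, j) ∈ dropCol μ ↔ (i, j + 1) ∈ μ := by
  simp [dropCol, ← mem_cells]

theorem rowLen_dropCol (μ : YoungDiagram) (i : ℕ) : (dropCol μ).rowLen i = μ.rowLen i - 1 :=
  rowLen_eq_of_forall_mem_iff fun j => by rw [mem_dropCol, mem_iff_lt_rowLen]; omega

theorem colLen_dropCol (μ : YoungDiagram) (j : ℕ) : (dropCol μ).colLen j = μ.colLen (j + 1) :=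
  colLen_eq_of_forall_mem_iff fun _ => by rw [mem_dropCol, mem_iff_lt_colLen]

theorem colLen_dropCol_le (μ : YoungDiagram) : (dropCol μ).colLen 0 ≤ μ.colLen 0 := by
  rw [colLen_dropCol]
  exact μ.colLen_anti 0 1 zero_le_one

theorem dropCol_consCol {μ : YoungDiagram} {r : ℕ} (hr : μ.colLen 0 ≤ r) :
    dropCol (consCol μ r hr) = μ := by
  ext ⟨i, j⟩
  rw [mem_cells, mem_cells, mem_dropCol, mem_consCol_succ]

theorem consCol_dropCol (μ : YoungDiagram) {r : ℕ} (hr : (dropCol μ).colLen 0 ≤ r)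
    (h : μ.colLen 0 = r) : consCol (dropCol μ) r hr = μ := by
  subst h
  ext ⟨i, j⟩
  rw [mem_cells, mem_cells]
  cases j with
  | zero => rw [mem_consCol_zero, mem_iff_lt_colLen]
  | succ j => rw [mem_consCol_succ, mem_dropCol]

end YoungDiagram

namespace PermTableau

open Finset

variable {n : ℕ}

theorem ext {T T' : PermTableau n} (hshape : T.shape = T'.shape) (hrows : T.rows = T'.rows)
    (hfilling : T.filling = T'.filling) : T = T' := by
  cases T; cases T'; simp_all

theorem lt_of_mem_shape (T : PermTableau n) {i j : ℕ} (h : (i, j) ∈ T.shape) :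
    i < n ∧ j < n := by
  have hi := YoungDiagram.mem_iff_lt_colLen.1 (T.shape.up_left_mem le_rfl (zero_le j) h)
  have hj := YoungDiagram.mem_iff_lt_rowLen.1 (T.shape.up_left_mem (zero_le i) le_rfl h)
  have := T.half
  have := T.rows_ge
  omega

theorem filling_eq_false_of_not_lt (T : PermTableau n) {i j : ℕ} (h : ¬ (i < n ∧ j < n)) :
    T.filling (i, j) = false :=
  T.support _ fun hmem => h (T.lt_of_mem_shape hmem)

theorem mem_shape_of_filling_eq_true (T : PermTableau n) {c : ℕ × ℕ} (h : T.filling c = true) :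
    c ∈ T.shape := by
  by_contra hc
  exact Bool.false_ne_true ((T.support c hc).symm.trans h)

instance : Finite (PermTableau n) := by
  refine Finite.of_injective (β := Fin (n + 1) × (Fin n × Fin n → Prop × Bool))
    (fun T => (⟨T.rows, by have := T.half; omega⟩,
      fun c => ((c.1.1, c.2.1) ∈ T.shape, T.filling (c.1, c.2)))) ?_
  intro T T' h
  simp only [Prod.mk.injEq, Fin.mk.injEq, funext_iff] at h
  obtain ⟨hrows, hbox⟩ := h
  refine ext ?_ hrows (funext fun ⟨i, j⟩ => ?_)
  · ext ⟨i, j⟩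
    by_cases hb : i < n ∧ j < n
    · exact iff_of_eq (hbox (⟨i, hb.1⟩, ⟨j, hb.2⟩)).1
    · exact iff_of_false (fun h => hb (T.lt_of_mem_shape h)) (fun h => hb (T'.lt_of_mem_shape h))
  · by_cases hb : i < n ∧ j < n
    · exact (hbox (⟨i, hb.1⟩, ⟨j, hb.2⟩)).2
    · rw [T.filling_eq_false_of_not_lt hb, T'.filling_eq_false_of_not_lt hb]

noncomputable instance : Fintype (PermTableau n) := Fintype.ofFinite _

theorem rows_eq_one (T : PermTableau 1) : T.rows = 1 := by
  have := T.half
  have := T.rows_pos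
  omega

theorem shape_eq_bot (T : PermTableau 1) : T.shape = ⊥ := by
  have hlen : T.shape.rowLen 0 = 0 := by
    have := T.half
    have := T.rows_pos
    omega
  ext ⟨i, j⟩
  simp only [YoungDiagram.mem_cells, YoungDiagram.notMem_bot, iff_false]
  intro h
  have := YoungDiagram.mem_iff_lt_rowLen.1 (T.shape.up_left_mem (zero_le i) le_rfl h)
  omega

instance : Unique (PermTableau 1) where
  default :=
    { shape := ⊥
      rows := 1
      rows_pos := one_pos
      rows_ge := by simp
      half := by simp
      filling := fun _ => false
      support := fun _ _ => rfl
      col_one := by simp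
      avoid := fun _ _ h => absurd h (YoungDiagram.notMem_bot _) }
  uniq T := ext (shape_eq_bot T) (rows_eq_one T)
    (funext fun c => T.support c (shape_eq_bot T ▸ YoungDiagram.notMem_bot c))

open Classical in
noncomputable def unresRows (T : PermTableau n) : Finset ℕ :=
  {i ∈ range T.rows | T.unres i}

theorem mem_unresRows {T : PermTableau n} {i : ℕ} :
    i ∈ T.unresRows ↔ i < T.rows ∧ T.unres i := by
  classical
  simp [unresRows]

theorem U_eq_card_unresRows (T : PermTableau n) : T.U = #T.unresRows := by
  rw [U, ← Set.ncard_coe_finset]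
  congr 1
  ext i
  rw [Set.mem_ofPred_eq, mem_coe, mem_unresRows]

theorem unres_of_colLen_le (T : PermTableau n) {i : ℕ} (h : T.shape.colLen 0 ≤ i) :
    T.unres i := fun j hmem =>
  absurd (YoungDiagram.mem_iff_lt_colLen.1 (T.shape.up_left_mem le_rfl (zero_le j) hmem))
    h.not_gt

/-- Equivalently, the border of `T` ends with a south step. -/
def LastRowEmpty (T : PermTableau n) : Prop :=
  T.shape.colLen 0 < T.rows

instance : DecidablePred (LastRowEmpty (n := n)) :=
  fun T => inferInstanceAs (Decidable (T.shape.colLen 0 < T.rows))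

theorem colLen_eq_rows_of_not_lastRowEmpty {T : PermTableau n} (h : ¬ T.LastRowEmpty) :
    T.shape.colLen 0 = T.rows :=
  le_antisymm T.rows_ge (not_lt.1 h)

theorem U_eq_one (T : PermTableau 1) : T.U = 1 := by
  have : T.unresRows = {0} := by
    ext i
    rw [mem_unresRows, mem_singleton, rows_eq_one]
    refine ⟨fun h => Nat.lt_one_iff.1 h.1, fun hi => ⟨by omega, T.unres_of_colLen_le ?_⟩⟩
    simp [shape_eq_bot]
  rw [U_eq_card_unresRows, this, card_singleton]

theorem lastRowEmpty_of_one (T : PermTableau 1) : T.LastRowEmpty := by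
  simp [LastRowEmpty, shape_eq_bot, rows_eq_one]

theorem cornerCount_shape_of_one (T : PermTableau 1) : cornerCount T.shape = 0 := by
  simp [YoungDiagram.cornerCount_eq_ncard_cornerSet, YoungDiagram.cornerSet, shape_eq_bot]

def appendRow (T : PermTableau n) : PermTableau (n + 1) where
  shape := T.shape
  rows := T.rows + 1
  rows_pos := Nat.succ_pos _
  rows_ge := T.rows_ge.trans (Nat.le_succ _)
  half := by have := T.half; omega
  filling := T.filling
  support := T.support
  col_one := T.col_one
  avoid := T.avoid

theorem appendRow_shape (T : PermTableau n) : T.appendRow.shape = T.shape := rfl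

theorem lastRowEmpty_appendRow (T : PermTableau n) : T.appendRow.LastRowEmpty :=
  Nat.lt_succ_of_le T.rows_ge

theorem U_appendRow (T : PermTableau n) : T.appendRow.U = T.U + 1 := by
  have hrows : T.appendRow.unresRows = insert T.rows T.unresRows := by
    ext i
    simp only [mem_insert, mem_unresRows]
    constructor
    · rintro ⟨hi, hu⟩
      rcases Nat.lt_succ_iff_lt_or_eq.1 hi with hi | rfl
      exacts [Or.inr ⟨hi, hu⟩, Or.inl rfl]
    · rintro (rfl | ⟨hi, hu⟩)
      exacts [⟨Nat.lt_succ_self _, T.unres_of_colLen_le T.rows_ge⟩,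
        ⟨Nat.lt_succ_of_lt hi, hu⟩]
  rw [U_eq_card_unresRows, U_eq_card_unresRows, hrows,
    card_insert_of_notMem fun h => lt_irrefl _ (mem_unresRows.1 h).1]

theorem two_le_rows_of_lastRowEmpty {T : PermTableau (n + 2)} (h : T.LastRowEmpty) :
    2 ≤ T.rows := by
  by_contra hlt
  have hcol : T.shape.colLen 0 = 0 := by have := T.rows_pos; unfold LastRowEmpty at h; omega
  have hrow : T.shape.rowLen 0 = 0 := by
    by_contra hne
    have := YoungDiagram.mem_iff_lt_colLen.1
      (YoungDiagram.mem_iff_lt_rowLen.2 (Nat.pos_of_ne_zero hne))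
    omega
  have := T.half
  omega

def dropLastRow (T : PermTableau (n + 2)) (h : T.LastRowEmpty) : PermTableau (n + 1) where
  shape := T.shape
  rows := T.rows - 1
  rows_pos := by have := two_le_rows_of_lastRowEmpty h; omega
  rows_ge := Nat.le_sub_one_of_lt h
  half := by have := T.half; have := T.rows_pos; omega
  filling := T.filling
  support := T.support
  col_one := T.col_one
  avoid := T.avoid

theorem appendRow_dropLastRow (T : PermTableau (n + 2)) (h : T.LastRowEmpty) :
    (T.dropLastRow h).appendRow = T :=
  ext rfl (Nat.sub_add_cancel T.rows_pos) rfl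

theorem dropLastRow_appendRow (T : PermTableau (n + 1)) :
    T.appendRow.dropLastRow T.lastRowEmpty_appendRow = T :=
  ext rfl rfl rfl

abbrev NewCol (T : PermTableau n) : Type :=
  {A : Finset ℕ // A ⊆ T.unresRows ∧ A.Nonempty}

noncomputable instance (T : PermTableau n) : Fintype T.NewCol :=
  Fintype.subtype (T.unresRows.powerset.filter (·.Nonempty)) fun A => by
    rw [mem_filter, mem_powerset]

theorem sum_newCol {M : Type*} [AddCommMonoid M] (T : PermTableau n) (f : Finset ℕ → M) :
    ∑ A : T.NewCol, f A.1 = ∑ A ∈ T.unresRows.powerset with A.Nonempty, f A :=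
  (sum_subtype _ (fun A => by rw [mem_filter, mem_powerset]) f).symm

theorem NewCol.mem_unresRows {T : PermTableau n} (A : T.NewCol) {i : ℕ} (hi : i ∈ A.1) :
    i < T.rows ∧ T.unres i :=
  PermTableau.mem_unresRows.1 (A.2.1 hi)

def consCol (T : PermTableau n) (A : T.NewCol) : PermTableau (n + 1) where
  shape := T.shape.consCol T.rows T.rows_ge
  rows := T.rows
  rows_pos := T.rows_pos
  rows_ge := YoungDiagram.colLen_consCol_zero.le
  half := by
    rw [YoungDiagram.rowLen_consCol T.rows_pos]
    have := T.half
    omega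
  filling
    | (i, 0) => decide (i ∈ A.1)
    | (i, j + 1) => T.filling (i, j)
  support
    | (i, 0), hmem => by
      rw [YoungDiagram.mem_consCol_zero] at hmem
      exact decide_eq_false fun hi => hmem (A.mem_unresRows hi).1
    | (i, j + 1), hmem => T.support _ (YoungDiagram.mem_consCol_succ.not.1 hmem)
  col_one
    | 0, _ => A.2.2.elim fun i hi => ⟨i, decide_eq_true hi⟩
    | j + 1, hj => T.col_one j (by rw [YoungDiagram.rowLen_consCol T.rows_pos] at hj; omega)
  avoid
    | _, 0, _, _, _, _, hj' => absurd hj' (Nat.not_lt_zero _)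
    | i, j + 1, hmem, hzero, ⟨i', hi', hone⟩, 0, _ => decide_eq_false fun hi =>
      Bool.false_ne_true <| ((A.mem_unresRows hi).2 j
        (YoungDiagram.mem_consCol_succ.1 hmem) hzero i' hi').symm.trans hone
    | i, j + 1, hmem, hzero, ⟨i', hi', hone⟩, j' + 1, hj' =>
      T.avoid i j (YoungDiagram.mem_consCol_succ.1 hmem) hzero ⟨i', hi', hone⟩ j' (by omega)

section consCol

variable (T : PermTableau n) (A : T.NewCol)

theorem consCol_shape : (T.consCol A).shape = T.shape.consCol T.rows T.rows_ge := rfl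

theorem consCol_rows : (T.consCol A).rows = T.rows := rfl

theorem consCol_filling_zero (i : ℕ) : (T.consCol A).filling (i, 0) = decide (i ∈ A.1) := rfl

theorem not_lastRowEmpty_consCol : ¬ (T.consCol A).LastRowEmpty := by
  rw [LastRowEmpty, consCol_shape, consCol_rows, YoungDiagram.colLen_consCol_zero]
  exact lt_irrefl _

theorem cornerCount_consCol :
    cornerCount (T.consCol A).shape = cornerCount T.shape + if T.LastRowEmpty then 1 else 0 := by
  rw [consCol_shape, YoungDiagram.cornerCount_consCol T.rows_pos]
  rfl

theorem unres_consCol {i : ℕ} (hi : i < T.rows) :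
    (T.consCol A).unres i ↔ i ∈ A.1 ∨ (T.unres i ∧ ∀ a ∈ A.1, i < a) := by
  rw [unres, consCol_shape]
  constructor
  · intro hu
    refine or_iff_not_imp_left.2 fun hiA => ⟨fun j hmem hzero i' hi' => ?_, fun a ha => ?_⟩
    · exact hu (j + 1) (YoungDiagram.mem_consCol_succ.2 hmem) hzero i' hi'
    · by_contra hle
      have := hu 0 (YoungDiagram.mem_consCol_zero.2 hi) (decide_eq_false hiA) a
        (lt_of_le_of_ne (not_lt.1 hle) fun h => hiA (h ▸ ha))
      exact absurd (decide_eq_false_iff_not.1 this) (not_not.2 ha)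
  · intro h j hmem hzero i' hi'
    cases j with
    | zero =>
      refine decide_eq_false fun hi'A => ?_
      rcases h with hiA | ⟨-, hlt⟩
      · exact absurd (decide_eq_true hiA) (Bool.eq_false_iff.1 hzero)
      · exact lt_asymm hi' (hlt i' hi'A)
    | succ j =>
      have hu : T.unres i := h.elim (fun hiA => (A.mem_unresRows hiA).2) And.left
      exact hu j (YoungDiagram.mem_consCol_succ.1 hmem) hzero i' hi'

theorem unresRows_consCol :
    (T.consCol A).unresRows = A.1 ∪ {x ∈ T.unresRows | ∀ a ∈ A.1, x < a} := by
  ext i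
  rw [mem_union, mem_filter, mem_unresRows, mem_unresRows]
  constructor
  · rintro ⟨hi, hu⟩
    exact ((T.unres_consCol A hi).1 hu).imp_right fun h => ⟨⟨hi, h.1⟩, h.2⟩
  · intro h
    have hi : i < T.rows := h.elim (fun hiA => (A.mem_unresRows hiA).1) fun h => h.1.1
    exact ⟨hi, (T.unres_consCol A hi).2 (h.imp_right fun h => ⟨h.1.2, h.2⟩)⟩

theorem U_consCol :
    (T.consCol A).U = #A.1 + #{x ∈ T.unresRows | ∀ a ∈ A.1, x < a} := by
  rw [U_eq_card_unresRows, unresRows_consCol, card_union_of_disjoint]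
  exact disjoint_left.2 fun a ha h => lt_irrefl a ((mem_filter.1 h).2 a ha)

end consCol

theorem zero_lt_rowLen_of_not_lastRowEmpty {T : PermTableau n} (h : ¬ T.LastRowEmpty) :
    0 < T.shape.rowLen 0 := by
  rw [← YoungDiagram.mem_iff_lt_rowLen, YoungDiagram.mem_iff_lt_colLen,
    colLen_eq_rows_of_not_lastRowEmpty h]
  exact T.rows_pos

noncomputable def dropFirstCol (T : PermTableau (n + 1)) (h : ¬ T.LastRowEmpty) :
    PermTableau n where
  shape := T.shape.dropCol
  rows := T.rows
  rows_pos := T.rows_pos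
  rows_ge := (YoungDiagram.colLen_dropCol_le _).trans T.rows_ge
  half := by
    rw [YoungDiagram.rowLen_dropCol]
    have := T.half
    have := zero_lt_rowLen_of_not_lastRowEmpty h
    omega
  filling c := T.filling (c.1, c.2 + 1)
  support c hmem := T.support _ (YoungDiagram.mem_dropCol.not.1 hmem)
  col_one j hj := by
    rw [YoungDiagram.rowLen_dropCol] at hj
    exact T.col_one (j + 1) (by omega)
  avoid i j hmem hzero hone j' hj' :=
    T.avoid i (j + 1) (YoungDiagram.mem_dropCol.1 hmem) hzero hone (j' + 1) (by omega)

def firstColOnes (T : PermTableau n) : Finset ℕ :=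
  {i ∈ range T.rows | T.filling (i, 0)}

theorem mem_firstColOnes {T : PermTableau n} {i : ℕ} :
    i ∈ T.firstColOnes ↔ i < T.rows ∧ T.filling (i, 0) = true := by
  rw [firstColOnes, mem_filter, mem_range]

def firstCol (T : PermTableau (n + 1)) (h : ¬ T.LastRowEmpty) : (T.dropFirstCol h).NewCol := by
  refine ⟨T.firstColOnes, fun i hi => ?_, ?_⟩
  · -- a restricted `0` in row `i` would contradict the `1` at its left end
    obtain ⟨hi, hone⟩ := mem_firstColOnes.1 hi
    refine mem_unresRows.2 ⟨hi, fun j hmem hzero i' hi' => ?_⟩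
    by_contra hone'
    have := T.avoid i (j + 1) (YoungDiagram.mem_dropCol.1 hmem) hzero
      ⟨i', hi', Bool.not_eq_false _ ▸ hone'⟩ 0 (Nat.succ_pos j)
    exact Bool.false_ne_true (this.symm.trans hone)
  · obtain ⟨i, hone⟩ := T.col_one 0 (zero_lt_rowLen_of_not_lastRowEmpty h)
    have hmem := YoungDiagram.mem_iff_lt_colLen.1 (T.mem_shape_of_filling_eq_true hone)
    rw [colLen_eq_rows_of_not_lastRowEmpty h] at hmem
    exact ⟨i, mem_firstColOnes.2 ⟨hmem, hone⟩⟩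

theorem dropFirstCol_consCol (T : PermTableau n) (A : T.NewCol) :
    (T.consCol A).dropFirstCol (T.not_lastRowEmpty_consCol A) = T :=
  ext (YoungDiagram.dropCol_consCol T.rows_ge) rfl rfl

theorem firstColOnes_consCol (T : PermTableau n) (A : T.NewCol) :
    (T.consCol A).firstColOnes = A.1 := by
  ext i
  rw [mem_firstColOnes, consCol_rows, consCol_filling_zero, decide_eq_true_iff]
  exact ⟨And.right, fun hi => ⟨(A.mem_unresRows hi).1, hi⟩⟩

theorem consCol_dropFirstCol (T : PermTableau (n + 1)) (h : ¬ T.LastRowEmpty) :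
    (T.dropFirstCol h).consCol (T.firstCol h) = T := by
  refine ext (YoungDiagram.consCol_dropCol _ (T.dropFirstCol h).rows_ge
    (colLen_eq_rows_of_not_lastRowEmpty h)) rfl ?_
  funext ⟨i, j⟩
  cases j with
  | zero =>
    rw [consCol_filling_zero]
    cases hone : T.filling (i, 0) with
    | false => exact decide_eq_false fun hi => by simp [firstCol, mem_firstColOnes, hone] at hi
    | true =>
      refine decide_eq_true (mem_firstColOnes.2 ⟨?_, hone⟩)
      rw [← colLen_eq_rows_of_not_lastRowEmpty h]
      exact YoungDiagram.mem_iff_lt_colLen.1 (T.mem_shape_of_filling_eq_true hone)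
  | succ j => rfl

noncomputable def succEquiv (n : ℕ) :
    PermTableau (n + 1) ⊕ (Σ T : PermTableau (n + 1), T.NewCol) ≃ PermTableau (n + 2) where
  toFun := Sum.elim appendRow fun p => p.1.consCol p.2
  invFun T := if h : T.LastRowEmpty then .inl (T.dropLastRow h) else
    .inr ⟨T.dropFirstCol h, T.firstCol h⟩
  left_inv := by
    rintro (T | ⟨T, A⟩)
    · simp [T.lastRowEmpty_appendRow, dropLastRow_appendRow]
    · simp only [Sum.elim_inr, T.not_lastRowEmpty_consCol A, ↓reduceDIte]
      exact congrArg Sum.inr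
        (Sigma.subtype_ext (dropFirstCol_consCol T A) (firstColOnes_consCol T A))
  right_inv T := by
    by_cases h : T.LastRowEmpty
    · simp [h, appendRow_dropLastRow]
    · simp [h, consCol_dropFirstCol]

theorem sum_succ {M : Type*} [AddCommMonoid M] (f : PermTableau (n + 2) → M) :
    ∑ T, f T =
      ∑ T : PermTableau (n + 1), (f T.appendRow + ∑ A : T.NewCol, f (T.consCol A)) := by
  rw [← (succEquiv n).sum_comp, Fintype.sum_sum_type, ← univ_sigma_univ, sum_sigma,
    ← sum_add_distrib]
  rfl

section GeneratingFunctions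

open Polynomial

variable {R : Type*} [CommRing R]

theorem sum_newCol_pow_U (T : PermTableau n) (m : R) :
    ∑ A : T.NewCol, m ^ (T.consCol A).U = m * ((m + 1) ^ T.U - m ^ T.U) := by
  simp only [U_consCol]
  rw [sum_newCol T fun A => m ^ (#A + #{x ∈ T.unresRows | ∀ a ∈ A, x < a}),
    sum_nonempty_powerset_pow_card_add_card_lt, U_eq_card_unresRows]

theorem sum_pow_U (n : ℕ) (m : R) :
    ∑ T : PermTableau (n + 1), m ^ T.U = (ascPochhammer R (n + 1)).eval m := by
  induction n generalizing m with
  | zero => simp [U_eq_one]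
  | succ n ih =>
    rw [sum_succ, ascPochhammer_succ_left, eval_mul, eval_X, eval_comp, eval_add, eval_X, eval_one,
      ← ih, mul_sum]
    refine sum_congr rfl fun T _ => ?_
    rw [U_appendRow, sum_newCol_pow_U]
    ring

theorem sum_lastRowEmpty_pow_U (n : ℕ) (m : R) :
    ∑ T : PermTableau (n + 1) with T.LastRowEmpty, m ^ T.U =
      m * (ascPochhammer R n).eval m := by
  rw [sum_filter]
  cases n with
  | zero => simp [U_eq_one, lastRowEmpty_of_one]
  | succ n =>
    rw [sum_succ, ← sum_pow_U, mul_sum]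
    refine sum_congr rfl fun T _ => ?_
    simp [lastRowEmpty_appendRow, not_lastRowEmpty_consCol, U_appendRow, pow_succ, mul_comm]

theorem sum_cornerCount_mul_pow_U_succ (n : ℕ) (m : R) :
    ∑ T : PermTableau (n + 2), (cornerCount T.shape : R) * m ^ T.U =
      m * ∑ T : PermTableau (n + 1), (cornerCount T.shape : R) * (m + 1) ^ T.U +
        m * ∑ T : PermTableau (n + 1) with T.LastRowEmpty, ((m + 1) ^ T.U - m ^ T.U) := by
  rw [sum_succ, sum_filter, mul_sum, mul_sum, ← sum_add_distrib]
  refine sum_congr rfl fun T _ => ?_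
  simp only [cornerCount_consCol, appendRow_shape, U_appendRow, Nat.cast_add]
  rw [← mul_sum, sum_newCol_pow_U]
  split_ifs <;> push_cast <;> ring

theorem sum_cornerCount_mul_pow_U (n : ℕ) (m : R) :
    6 * ((m + n - 1) * (m + n)) * ∑ T : PermTableau (n + 1), (cornerCount T.shape : R) * m ^ T.U =
      n * (3 * (n + 1) * m + (n + 4) * (n - 1)) * (ascPochhammer R (n + 1)).eval m := by
  induction n generalizing m with
  | zero => simp [cornerCount_shape_of_one]
  | succ n ih =>
    have hshift : (ascPochhammer R n).eval m * (m + n) = m * (ascPochhammer R n).eval (m + 1) := by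
      rw [← ascPochhammer_succ_eval, ascPochhammer_succ_left, eval_mul, eval_X, eval_comp,
        eval_add, eval_X, eval_one]
    rw [sum_cornerCount_mul_pow_U_succ, sum_sub_distrib, sum_lastRowEmpty_pow_U,
      sum_lastRowEmpty_pow_U, ascPochhammer_succ_left, eval_mul, eval_X, eval_comp, eval_add,
      eval_X, eval_one, ascPochhammer_succ_eval]
    have ih' := ih (m + 1)
    rw [ascPochhammer_succ_eval] at ih'
    push_cast at ih' ⊢
    linear_combination m * ih' - 6 * (m + n + 1) * m ^ 2 * hshift

end GeneratingFunctions

end PermTableau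

/-- The expected number of corners in a uniformly random permutation tableau of size
`n` equals `(n + 4)/6 - 1/n`; equivalently, the total number of corners over all
permutation tableaux of size `n` equals `n ! * ((n + 4)/6 - 1/n)`. -/
theorem expected_corners_permTableau (n : ℕ) (hn : 2 ≤ n) :
    (∑ᶠ T : PermTableau n, (cornerCount T.shape : ℚ)) / n ! =
        ((n : ℚ) + 4) / 6 - 1 / n ∧
      (∑ᶠ T : PermTableau n, (cornerCount T.shape : ℚ)) =
        (n ! : ℚ) * (((n : ℚ) + 4) / 6 - 1 / n) := by
  obtain ⟨k, rfl⟩ : ∃ k, n = k + 1 := ⟨n - 1, by omega⟩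
  have hk : (k : ℚ) ≠ 0 := Nat.cast_ne_zero.2 (by omega)
  have htotal : ∑ᶠ T : PermTableau (k + 1), (cornerCount T.shape : ℚ) =
      ((k + 1)! : ℚ) * ((((k + 1 : ℕ) : ℚ) + 4) / 6 - 1 / ((k + 1 : ℕ) : ℚ)) := by
    have h := PermTableau.sum_cornerCount_mul_pow_U (R := ℚ) k 1
    simp only [one_pow, mul_one, ascPochhammer_eval_one] at h
    rw [finsum_eq_sum_of_fintype]
    push_cast at h ⊢
    have h' : 6 * (k + 1) * ∑ T : PermTableau (k + 1), (cornerCount T.shape : ℚ) =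
        (k ^ 2 + 6 * k - 1) * (k + 1)! :=
      mul_left_cancel₀ hk (by linear_combination h)
    field_simp
    linear_combination h'
  refine ⟨?_, htotal⟩
  rw [htotal, mul_div_cancel_left₀ _ (Nat.cast_ne_zero.2 (Nat.factorial_ne_zero _))]
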